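/- Let f be a symmetric, strictly order-inverting partition function on Setoid (Fin n). If f is supermodular, then the minimum-f-weight partition distance is δ_f(P,Q) = f(P) + f(Q) − 2·f(P ⊔ Q) for all partitions P, Q; if instead f is submodular, then δ_f(P,Q) = 2·f(P ⊓ Q) − f(P) − f(Q) for all partitions P, Q. -/

import Mathlib

open scoped BigOperators

/-- The Hasse-diagram graph of the partition lattice: `P` and `Q` are adjacent
iff one covers the other. -/
def hasse (n : ℕ) : SimpleGraph (Setoid (Fin n)) where
  Adj P Q := P ⋖ Q ∨ Q ⋖ P
  symm := ⟨fun P Q h => h.symm⟩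
  loopless := ⟨fun P h => by cases h with
    | inl h => exact lt_irrefl P h.lt
    | inr h => exact lt_irrefl P h.lt⟩

/-- The weight of an edge `{P,Q}` induced by `f`: `|f(P) - f(Q)|`. -/
noncomputable def eWeight {n : ℕ} (f : Setoid (Fin n) → ℝ) : Sym2 (Setoid (Fin n)) → ℝ :=
  Sym2.lift ⟨fun P Q => |f P - f Q|, fun P Q => abs_sub_comm (f P) (f Q)⟩

/-- The weight of a walk in the Hasse diagram: the sum of its edge weights. -/
noncomputable def walkWeight {n : ℕ} (f : Setoid (Fin n) → ℝ) {P Q : Setoid (Fin n)}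
    (W : (hasse n).Walk P Q) : ℝ :=
  (W.edges.map (eWeight f)).sum

/-- The minimum-`f`-weight distance `δ_f(P,Q)`: the minimum weight of a walk
from `P` to `Q` in the Hasse diagram. -/
noncomputable def deltaW {n : ℕ} (f : Setoid (Fin n) → ℝ) (P Q : Setoid (Fin n)) : ℝ :=
  sInf {w : ℝ | ∃ W : (hasse n).Walk P Q, walkWeight f W = w}

/-!
A function `d` that is symmetric, satisfies the triangle inequality and is bounded by
`|f P - f Q|` on comparable pairs bounds the weight of every walk from `P` to `Q` from below, so
`δ_f(P,Q) = d P Q` as soon as some walk attains `d P Q`. For antitone supermodular `f`, the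
function `d P Q = f P + f Q - 2 f (P ⊔ Q)` satisfies the triangle inequality (apply
supermodularity to `P ⊔ Q` and `Q ⊔ R`), and it is attained by a maximal chain from `P` up to
`P ⊔ Q` followed by one down to `Q`: since `f` strictly decreases along covers, the edge weights
telescope. The submodular case is the order dual, through `P ⊓ Q`.
-/

instance Setoid.instFinite {α : Type*} [Finite α] : Finite (Setoid α) :=
  Finite.of_injective (fun s : Setoid α => s.r) fun _ _ h => Setoid.ext fun _ _ => by
    simp only at h; rw [h]

section LatticeDist

variable {α : Type*} [Lattice α] (f : α → ℝ)

def supDist (P Q : α) : ℝ := f P + f Q - 2 * f (P ⊔ Q)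

def infDist (P Q : α) : ℝ := 2 * f (P ⊓ Q) - f P - f Q

variable {f}

lemma supDist_comm (P Q : α) : supDist f P Q = supDist f Q P := by
  rw [supDist, supDist, sup_comm, add_comm (f P)]

lemma infDist_comm (P Q : α) : infDist f P Q = infDist f Q P := by
  rw [infDist, infDist, inf_comm]; ring

lemma supDist_eq_abs_of_le (hf : Antitone f) {P Q : α} (h : P ≤ Q) :
    supDist f P Q = |f P - f Q| := by
  rw [supDist, sup_eq_right.2 h, abs_of_nonneg (sub_nonneg.2 (hf h))]; ring

lemma infDist_eq_abs_of_le (hf : Antitone f) {P Q : α} (h : P ≤ Q) :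
    infDist f P Q = |f P - f Q| := by
  rw [infDist, inf_eq_left.2 h, abs_of_nonneg (sub_nonneg.2 (hf h))]; ring

lemma supDist_triangle (hf : Antitone f)
    (hsuper : ∀ P Q : α, f P + f Q ≤ f (P ⊔ Q) + f (P ⊓ Q)) (P Q R : α) :
    supDist f P R ≤ supDist f P Q + supDist f Q R := by
  have hmod := hsuper (P ⊔ Q) (Q ⊔ R)
  have hsup : f (P ⊔ Q ⊔ (Q ⊔ R)) ≤ f (P ⊔ R) :=
    hf (sup_le (le_sup_left.trans le_sup_left) (le_sup_right.trans le_sup_right))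
  have hinf : f ((P ⊔ Q) ⊓ (Q ⊔ R)) ≤ f Q := hf (le_inf le_sup_right le_sup_left)
  simp only [supDist]
  linarith

/-- Order duality together with `f ↦ -f` exchanges the two distances and the two modularity
conditions. -/
lemma infDist_triangle (hf : Antitone f)
    (hsub : ∀ P Q : α, f (P ⊔ Q) + f (P ⊓ Q) ≤ f P + f Q) (P Q R : α) :
    infDist f P R ≤ infDist f P Q + infDist f Q R := by
  have hdual := supDist_triangle (f := fun x : αᵒᵈ => -f (OrderDual.ofDual x))
    hf.dual_left.neg (fun P Q => by
      simp only [ofDual_sup, ofDual_inf]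
      linarith [hsub (OrderDual.ofDual P) (OrderDual.ofDual Q)])
    (OrderDual.toDual P) (OrderDual.toDual Q) (OrderDual.toDual R)
  simp only [supDist, infDist, ofDual_sup, OrderDual.ofDual_toDual] at hdual ⊢
  linarith

end LatticeDist

variable {n : ℕ} {f : Setoid (Fin n) → ℝ}

@[simp] lemma walkWeight_nil {P : Setoid (Fin n)} :
    walkWeight f (SimpleGraph.Walk.nil : (hasse n).Walk P P) = 0 := rfl

@[simp] lemma walkWeight_cons {P Q R : Setoid (Fin n)} (h : (hasse n).Adj P Q)
    (W : (hasse n).Walk Q R) :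
    walkWeight f (SimpleGraph.Walk.cons h W) = |f P - f Q| + walkWeight f W := by
  simp [walkWeight, eWeight]

@[simp] lemma walkWeight_append {P Q R : Setoid (Fin n)} (W : (hasse n).Walk P Q)
    (W' : (hasse n).Walk Q R) :
    walkWeight f (W.append W') = walkWeight f W + walkWeight f W' := by
  simp [walkWeight, SimpleGraph.Walk.edges_append]

@[simp] lemma walkWeight_reverse {P Q : Setoid (Fin n)} (W : (hasse n).Walk P Q) :
    walkWeight f W.reverse = walkWeight f W := by
  simp [walkWeight, SimpleGraph.Walk.edges_reverse, List.sum_reverse]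

lemma exists_walkWeight_eq_of_le (hf : StrictAnti f) {P R : Setoid (Fin n)} (h : P ≤ R) :
    ∃ W : (hasse n).Walk P R, walkWeight f W = f P - f R := by
  induction P using WellFoundedGT.induction with
  | _ P ih =>
    rcases h.eq_or_lt with rfl | hlt
    · exact ⟨.nil, by simp⟩
    · obtain ⟨S, hPS, hSR⟩ := hlt.exists_covby_le
      obtain ⟨W, hW⟩ := ih S hPS.lt hSR
      refine ⟨.cons (show (hasse n).Adj P S from Or.inl hPS) W, ?_⟩
      rw [walkWeight_cons, hW, abs_of_pos (sub_pos.2 (hf hPS.lt))]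
      ring

lemma exists_walkWeight_eq_supDist (hf : StrictAnti f) (P Q : Setoid (Fin n)) :
    ∃ W : (hasse n).Walk P Q, walkWeight f W = supDist f P Q := by
  obtain ⟨W₁, hW₁⟩ := exists_walkWeight_eq_of_le hf (le_sup_left : P ≤ P ⊔ Q)
  obtain ⟨W₂, hW₂⟩ := exists_walkWeight_eq_of_le hf (le_sup_right : Q ≤ P ⊔ Q)
  refine ⟨W₁.append W₂.reverse, ?_⟩
  rw [walkWeight_append, walkWeight_reverse, hW₁, hW₂, supDist]
  ring

lemma exists_walkWeight_eq_infDist (hf : StrictAnti f) (P Q : Setoid (Fin n)) :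
    ∃ W : (hasse n).Walk P Q, walkWeight f W = infDist f P Q := by
  obtain ⟨W₁, hW₁⟩ := exists_walkWeight_eq_of_le hf (inf_le_left : P ⊓ Q ≤ P)
  obtain ⟨W₂, hW₂⟩ := exists_walkWeight_eq_of_le hf (inf_le_right : P ⊓ Q ≤ Q)
  refine ⟨W₁.reverse.append W₂, ?_⟩
  rw [walkWeight_append, walkWeight_reverse, hW₁, hW₂, infDist]
  ring

section WalkBound

variable {d : Setoid (Fin n) → Setoid (Fin n) → ℝ}

lemma le_walkWeight (hcomm : ∀ P Q, d P Q = d Q P) (htri : ∀ P Q R, d P R ≤ d P Q + d Q R)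
    (hle : ∀ P Q, P ≤ Q → d P Q ≤ |f P - f Q|) {P Q : Setoid (Fin n)}
    (W : (hasse n).Walk P Q) : d P Q ≤ walkWeight f W := by
  induction W with
  | nil => simpa using hle _ _ le_rfl
  | @cons P S Q hadj W ih =>
    have hedge : d P S ≤ |f P - f S| := by
      rcases hadj with h | h
      · exact hle _ _ h.le
      · rw [hcomm, abs_sub_comm]; exact hle _ _ h.le
    rw [walkWeight_cons]
    exact (htri P S Q).trans (add_le_add hedge ih)

lemma deltaW_eq_of_exists_walkWeight_eq (hcomm : ∀ P Q, d P Q = d Q P)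
    (htri : ∀ P Q R, d P R ≤ d P Q + d Q R) (hle : ∀ P Q, P ≤ Q → d P Q ≤ |f P - f Q|)
    {P Q : Setoid (Fin n)} (hW : ∃ W : (hasse n).Walk P Q, walkWeight f W = d P Q) :
    deltaW f P Q = d P Q :=
  IsLeast.csInf_eq ⟨hW, by rintro _ ⟨W, rfl⟩; exact le_walkWeight hcomm htri hle W⟩

end WalkBound

theorem deltaW_of_order_inverting_general (n : ℕ) (f : Setoid (Fin n) → ℝ)
    (hanti : ∀ P Q : Setoid (Fin n), P < Q → f Q < f P) :
    ((∀ P Q : Setoid (Fin n), f P + f Q ≤ f (P ⊔ Q) + f (P ⊓ Q)) →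
      ∀ P Q : Setoid (Fin n), deltaW f P Q = f P + f Q - 2 * f (P ⊔ Q)) ∧
    ((∀ P Q : Setoid (Fin n), f (P ⊔ Q) + f (P ⊓ Q) ≤ f P + f Q) →
      ∀ P Q : Setoid (Fin n), deltaW f P Q = 2 * f (P ⊓ Q) - f P - f Q) := by
  have hf : StrictAnti f := hanti
  refine ⟨fun hsuper P Q => ?_, fun hsub P Q => ?_⟩
  · exact deltaW_eq_of_exists_walkWeight_eq supDist_comm
      (supDist_triangle hf.antitone hsuper) (fun _ _ h => (supDist_eq_abs_of_le hf.antitone h).le)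
      (exists_walkWeight_eq_supDist hf P Q)
  · exact deltaW_eq_of_exists_walkWeight_eq infDist_comm
      (infDist_triangle hf.antitone hsub) (fun _ _ h => (infDist_eq_abs_of_le hf.antitone h).le)
      (exists_walkWeight_eq_infDist hf P Q)

/-- For a symmetric, strictly order-inverting partition function `f`:
if `f` is supermodular then `δ_f(P,Q) = f(P) + f(Q) - 2 f(P ⊔ Q)`;
if `f` is submodular then `δ_f(P,Q) = 2 f(P ⊓ Q) - f(P) - f(Q)`. -/
theorem deltaW_of_order_inverting (n : ℕ) (f : Setoid (Fin n) → ℝ)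
    (hsymm : ∀ (π : Equiv.Perm (Fin n)) (P : Setoid (Fin n)), f (Setoid.comap π P) = f P)
    (hanti : ∀ P Q : Setoid (Fin n), P < Q → f Q < f P) :
    ((∀ P Q : Setoid (Fin n), f P + f Q ≤ f (P ⊔ Q) + f (P ⊓ Q)) →
      ∀ P Q : Setoid (Fin n), deltaW f P Q = f P + f Q - 2 * f (P ⊔ Q)) ∧
    ((∀ P Q : Setoid (Fin n), f (P ⊔ Q) + f (P ⊓ Q) ≤ f P + f Q) →
      ∀ P Q : Setoid (Fin n), deltaW f P Q = 2 * f (P ⊓ Q) - f P - f Q) :=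
  deltaW_of_order_inverting_general n f hanti
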